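/- arXiv:0705.3440 — 3 statements merged into one kernel-verified Lean document; each statement's English description precedes it below -/
import Mathlib

section
/- Let A be a commutative ring with Poisson bracket {·,·}, let Θ¹,…,Θᵏ ∈ A with C^{ab} = {Θᵃ,Θᵇ} invertible with inverse C_{ab}, and define the Dirac bracket {F,G}_D = {F,G} − Σ {F,Θᵃ} C_{ab} {Θᵇ,G}. Then {·,·}_D is again a Poisson bracket: it is antisymmetric, a biderivation, and satisfies the Jacobi identity Σ_{cycl F,G,H} {{F,G}_D, H}_D = 0 (holding identically in A, i.e. strongly). -/
/-!
Write `t(F) = ({F, Θᵃ})ₐ C⁻¹`, so that `D_F = {F, ·} - ∑_b t_b(F) {Θᵇ, ·}` is a derivation of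
`A` with `D_F Θᶜ = 0` for every `c`. The Jacobi identity of `{·,·}` measures how far `D_F` is from
being a derivation of `{·,·}`; with it the Jacobiator `D_F D_G H - D_G D_F H - D_{D_F G} H`
collapses to `∑_c γ_c {Θᶜ, H}` with `γ` independent of `H` (the entries of `C⁻¹` are never
differentiated). Taking `H = Θᵈ` kills the left side, so `γ C = 0`, hence `γ = 0` since `C` is
invertible.
-/

open Matrix

theorem Derivation.map_dotProduct {R A ι : Type*} [CommSemiring R] [CommSemiring A]
    [Algebra R A] [Fintype ι] (δ : Derivation R A A) (v w : ι → A) :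
    δ (v ⬝ᵥ w) = (fun i => δ (v i)) ⬝ᵥ w + v ⬝ᵥ fun i => δ (w i) := by
  simp only [dotProduct, map_sum, Derivation.leibniz, smul_eq_mul, ← Finset.sum_add_distrib]
  exact Finset.sum_congr rfl fun i _ => by ring

theorem Matrix.transpose_eq_neg_of_mul_eq_one {n R : Type*} [Fintype n] [DecidableEq n]
    [CommRing R] {M N : Matrix n n R} (hM : Mᵀ = -M) (h : M * N = 1) : Nᵀ = -N := by
  have hleft : -Nᵀ * M = 1 := by
    rw [neg_mul, ← mul_neg, ← hM, ← transpose_mul, h, transpose_one]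
  calc Nᵀ = -(-Nᵀ * (M * N)) := by rw [h, mul_one, neg_neg]
    _ = -N := by rw [← mul_assoc, hleft, one_mul]

section

variable {A : Type*} [CommRing A]

structure IsPoissonBracket (B : A → A → A) : Prop where
  antisymm : ∀ a b, B a b = -B b a
  add_left : ∀ a b c, B (a + b) c = B a c + B b c
  leibniz : ∀ a b c, B a (b * c) = B a b * c + b * B a c
  jacobi : ∀ a b c, B a (B b c) + B b (B c a) + B c (B a b) = 0

namespace IsPoissonBracket

variable {B : A → A → A} (hB : IsPoissonBracket B)
include hB

theorem add_right (a b c : A) : B a (b + c) = B a b + B a c := by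
  rw [hB.antisymm, hB.add_left, neg_add, ← hB.antisymm, ← hB.antisymm]

def ad (a : A) : Derivation ℤ A A :=
  Derivation.mk' (AddMonoidHom.mk' (B a) (hB.add_right a)).toIntLinearMap fun b c => by
    simp only [AddMonoidHom.coe_toIntLinearMap, AddMonoidHom.mk'_apply, hB.leibniz, smul_eq_mul]
    ring

@[simp] theorem ad_apply (a b : A) : hB.ad a b = B a b := rfl

theorem neg_right (a b : A) : B a (-b) = -B a b := map_neg (hB.ad a) b

theorem sub_right (a b c : A) : B a (b - c) = B a b - B a c := map_sub (hB.ad a) b c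

theorem sum_left {ι : Type*} (s : Finset ι) (f : ι → A) (c : A) :
    B (∑ i ∈ s, f i) c = ∑ i ∈ s, B (f i) c :=
  map_sum (AddMonoidHom.mk' (B · c) fun a b => hB.add_left a b c) f s

theorem sub_left (a b c : A) : B (a - b) c = B a c - B b c :=
  map_sub (AddMonoidHom.mk' (B · c) fun a b => hB.add_left a b c) a b

theorem zero_left (c : A) : B 0 c = 0 :=
  map_zero (AddMonoidHom.mk' (B · c) fun a b => hB.add_left a b c)

theorem mul_left (a b c : A) : B (a * b) c = a * B b c + B a c * b := by
  rw [hB.antisymm, hB.leibniz, hB.antisymm c, hB.antisymm c]; ring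

theorem dotProduct_right {ι : Type*} [Fintype ι] (a : A) (v w : ι → A) :
    B a (v ⬝ᵥ w) = (fun i => B a (v i)) ⬝ᵥ w + v ⬝ᵥ fun i => B a (w i) :=
  (hB.ad a).map_dotProduct v w

theorem dotProduct_left {ι : Type*} [Fintype ι] (v w : ι → A) (c : A) :
    B (v ⬝ᵥ w) c = (fun i => B (v i) c) ⬝ᵥ w + v ⬝ᵥ fun i => B (w i) c := by
  simp only [dotProduct, hB.sum_left, hB.mul_left, ← Finset.sum_add_distrib]
  exact Finset.sum_congr rfl fun i _ => by ring

theorem bracket_bracket (a b c : A) : B a (B b c) = B (B a b) c + B b (B a c) := by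
  have h : B b (B c a) = -B b (B a c) := by rw [hB.antisymm c a, hB.neg_right]
  linear_combination hB.jacobi a b c - h - hB.antisymm c (B a b)

end IsPoissonBracket

variable {ι : Type*}

def constraintMatrix (B : A → A → A) (Θ : ι → A) : Matrix ι ι A :=
  Matrix.of fun a b => B (Θ a) (Θ b)

theorem IsPoissonBracket.constraintMatrix_transpose {B : A → A → A} (hB : IsPoissonBracket B)
    (Θ : ι → A) : (constraintMatrix B Θ)ᵀ = -constraintMatrix B Θ := by
  ext a b
  exact hB.antisymm (Θ b) (Θ a)

variable [Fintype ι]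

def diracBracket (B : A → A → A) (Θ : ι → A) (K : Matrix ι ι A) (F G : A) : A :=
  B F G - ∑ a, ∑ b, B F (Θ a) * K a b * B (Θ b) G

def diracCoeff (B : A → A → A) (Θ : ι → A) (K : Matrix ι ι A) (F : A) : ι → A :=
  (fun a => B F (Θ a)) ᵥ* K

variable {B : A → A → A} (Θ : ι → A) (K : Matrix ι ι A)

theorem diracBracket_eq_sub_dotProduct (F G : A) :
    diracBracket B Θ K F G = B F G - diracCoeff B Θ K F ⬝ᵥ fun b => B (Θ b) G := by
  simp only [diracBracket, diracCoeff, dotProduct, vecMul, Finset.sum_mul]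
  rw [Finset.sum_comm]

theorem diracCoeff_vecMul_constraintMatrix [DecidableEq ι] (hKC : K * constraintMatrix B Θ = 1)
    (F : A) :
    diracCoeff B Θ K F ᵥ* constraintMatrix B Θ = fun c => B F (Θ c) := by
  rw [diracCoeff, vecMul_vecMul, hKC, vecMul_one]

theorem diracBracket_constraint_eq_zero [DecidableEq ι] (hKC : K * constraintMatrix B Θ = 1)
    (F : A) (c : ι) :
    diracBracket B Θ K F (Θ c) = 0 := by
  rw [diracBracket_eq_sub_dotProduct, sub_eq_zero]
  exact (congrFun (diracCoeff_vecMul_constraintMatrix Θ K hKC F) c).symm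

namespace IsPoissonBracket

variable (hB : IsPoissonBracket B)
include hB

def diracDerivation (F : A) : Derivation ℤ A A :=
  hB.ad F - ∑ b, diracCoeff B Θ K F b • hB.ad (Θ b)

theorem diracDerivation_apply (F G : A) :
    hB.diracDerivation Θ K F G = diracBracket B Θ K F G := by
  rw [diracDerivation, Derivation.sub_apply,
    ← Derivation.coeFnAddMonoidHom_apply (∑ b, diracCoeff B Θ K F b • hB.ad (Θ b)), map_sum,
    Finset.sum_apply]
  simp [diracBracket_eq_sub_dotProduct, dotProduct]

theorem diracBracket_add_right (F a b : A) :
    diracBracket B Θ K F (a + b) = diracBracket B Θ K F a + diracBracket B Θ K F b := by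
  simp only [← hB.diracDerivation_apply, map_add]

theorem diracBracket_neg_right (F a : A) :
    diracBracket B Θ K F (-a) = -diracBracket B Θ K F a := by
  simp only [← hB.diracDerivation_apply, map_neg]

theorem diracBracket_zero_right (F : A) : diracBracket B Θ K F 0 = 0 := by
  simp only [← hB.diracDerivation_apply, map_zero]

theorem diracBracket_mul_right (F a b : A) :
    diracBracket B Θ K F (a * b) = diracBracket B Θ K F a * b + a * diracBracket B Θ K F b := by
  simp only [← hB.diracDerivation_apply, Derivation.leibniz, smul_eq_mul]
  ring

theorem diracBracket_sub_dotProduct (F a : A) (v w : ι → A) :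
    diracBracket B Θ K F (a - v ⬝ᵥ w) = diracBracket B Θ K F a
      - ((fun i => diracBracket B Θ K F (v i)) ⬝ᵥ w
        + v ⬝ᵥ fun i => diracBracket B Θ K F (w i)) := by
  simp only [← hB.diracDerivation_apply, map_sub, Derivation.map_dotProduct]

theorem diracBracket_bracket (F X H : A) :
    diracBracket B Θ K F (B X H) =
      B (diracBracket B Θ K F X) H + B X (diracBracket B Θ K F H)
        + (fun b => B (diracCoeff B Θ K F b) H) ⬝ᵥ (fun b => B (Θ b) X)
        + (fun b => B X (diracCoeff B Θ K F b)) ⬝ᵥ fun b => B (Θ b) H := by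
  simp only [diracBracket_eq_sub_dotProduct, hB.sub_left, hB.sub_right, hB.dotProduct_left,
    hB.dotProduct_right, hB.bracket_bracket F X H]
  have h : (fun b => B (Θ b) (B X H)) = (fun b => B (B (Θ b) X) H) + fun b => B X (B (Θ b) H) :=
    funext fun b => hB.bracket_bracket (Θ b) X H
  rw [h, dotProduct_add]
  ring

theorem constraintMatrix_mulVec_diracCoeff [DecidableEq ι] (hKC : K * constraintMatrix B Θ = 1)
    (G : A) :
    constraintMatrix B Θ *ᵥ diracCoeff B Θ K G = fun b => B (Θ b) G := by
  rw [← vecMul_transpose, hB.constraintMatrix_transpose, vecMul_neg,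
    diracCoeff_vecMul_constraintMatrix Θ K hKC]
  ext b
  exact (hB.antisymm _ _).symm

theorem diracBracket_antisymm (hK : Kᵀ = -K) (F G : A) :
    diracBracket B Θ K F G = -diracBracket B Θ K G F := by
  have h : ∑ a, ∑ b, B G (Θ a) * K a b * B (Θ b) F
      = -∑ a, ∑ b, B F (Θ a) * K a b * B (Θ b) G := by
    rw [Finset.sum_comm]
    simp only [← Finset.sum_neg_distrib]
    refine Finset.sum_congr rfl fun a _ => Finset.sum_congr rfl fun b _ => ?_
    have hKba : K b a = -K a b := congrFun (congrFun hK a) b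
    rw [hKba, hB.antisymm G, hB.antisymm (Θ a) F]
    ring
  rw [diracBracket, diracBracket, h, hB.antisymm F G]
  ring

theorem diracBracket_jacobiator_eq [DecidableEq ι] (hKC : K * constraintMatrix B Θ = 1)
    (F G H : A) :
    diracBracket B Θ K F (diracBracket B Θ K G H) - diracBracket B Θ K G (diracBracket B Θ K F H)
        - diracBracket B Θ K (diracBracket B Θ K F G) H =
      ((fun c => diracBracket B Θ K G (diracCoeff B Θ K F c))
          - (fun c => diracBracket B Θ K F (diracCoeff B Θ K G c))
          + diracCoeff B Θ K (diracBracket B Θ K F G)) ⬝ᵥ fun c => B (Θ c) H := by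
  rw [diracBracket_eq_sub_dotProduct Θ K G H, hB.diracBracket_sub_dotProduct,
    diracBracket_eq_sub_dotProduct Θ K G (diracBracket B Θ K F H),
    diracBracket_eq_sub_dotProduct Θ K (diracBracket B Θ K F G) H]
  simp only [hB.diracBracket_bracket, diracBracket_constraint_eq_zero Θ K hKC, hB.zero_left,
    zero_add, add_dotProduct, sub_dotProduct]
  set t := diracCoeff B Θ K F
  set s := diracCoeff B Θ K G
  set η := fun b => B (Θ b) H
  have hsplit : (s ⬝ᵥ fun c => B (Θ c) (diracBracket B Θ K F H)
        + (fun b => B (t b) H) ⬝ᵥ (fun b => B (Θ b) (Θ c)) + (fun b => B (Θ c) (t b)) ⬝ᵥ η)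
      = (s ⬝ᵥ fun c => B (Θ c) (diracBracket B Θ K F H))
        + (s ⬝ᵥ fun c => (fun b => B (t b) H) ⬝ᵥ (fun b => B (Θ b) (Θ c)))
        + (s ⬝ᵥ fun c => (fun b => B (Θ c) (t b)) ⬝ᵥ η) := by
    simp only [dotProduct, mul_add, Finset.sum_add_distrib]
  have hconstraint : (s ⬝ᵥ fun c => (fun b => B (t b) H) ⬝ᵥ (fun b => B (Θ b) (Θ c)))
      = (fun b => B (t b) H) ⬝ᵥ fun b => B (Θ b) G := by
    rw [← hB.constraintMatrix_mulVec_diracCoeff Θ K hKC G, dotProduct_mulVec, dotProduct_comm]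
    rfl
  have hswap : (s ⬝ᵥ fun c => (fun b => B (Θ c) (t b)) ⬝ᵥ η)
      = (fun b => s ⬝ᵥ fun c => B (Θ c) (t b)) ⬝ᵥ η :=
    dotProduct_mulVec s (Matrix.of fun c b => B (Θ c) (t b)) η
  have hcoeff : (fun c => diracBracket B Θ K G (t c)) ⬝ᵥ η
      = (fun c => B G (t c)) ⬝ᵥ η - (fun c => s ⬝ᵥ fun b => B (Θ b) (t c)) ⬝ᵥ η := by
    rw [← sub_dotProduct]
    simp only [diracBracket_eq_sub_dotProduct]
    rfl
  rw [hsplit, hconstraint, hswap, hcoeff]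
  ring

theorem diracBracket_diracBracket [DecidableEq ι] (hKC : K * constraintMatrix B Θ = 1)
    (hCK : constraintMatrix B Θ * K = 1) (F G H : A) :
    diracBracket B Θ K F (diracBracket B Θ K G H) =
      diracBracket B Θ K (diracBracket B Θ K F G) H
        + diracBracket B Θ K G (diracBracket B Θ K F H) := by
  have hJ := hB.diracBracket_jacobiator_eq Θ K hKC F G
  set γ := (fun c => diracBracket B Θ K G (diracCoeff B Θ K F c))
    - (fun c => diracBracket B Θ K F (diracCoeff B Θ K G c))
    + diracCoeff B Θ K (diracBracket B Θ K F G)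
  have hγC : γ ᵥ* constraintMatrix B Θ = 0 := by
    ext d
    have h := hJ (Θ d)
    simp only [diracBracket_constraint_eq_zero Θ K hKC, hB.diracBracket_zero_right, sub_zero]
      at h
    exact h.symm
  have hγ : γ = 0 := by
    rw [← vecMul_one γ, ← hCK, ← vecMul_vecMul, hγC, zero_vecMul]
  have h := hJ H
  rw [hγ, zero_dotProduct] at h
  linear_combination h

theorem isPoissonBracket_diracBracket [DecidableEq ι] (hKC : K * constraintMatrix B Θ = 1)
    (hCK : constraintMatrix B Θ * K = 1) : IsPoissonBracket (diracBracket B Θ K) := by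
  have antisymm := hB.diracBracket_antisymm Θ K
    (transpose_eq_neg_of_mul_eq_one (hB.constraintMatrix_transpose Θ) hCK)
  refine ⟨antisymm, fun a b c => ?_, hB.diracBracket_mul_right Θ K, fun F G H => ?_⟩
  · rw [antisymm, antisymm a, antisymm b, hB.diracBracket_add_right, neg_add]
  · have h : diracBracket B Θ K G (diracBracket B Θ K H F)
        = -diracBracket B Θ K G (diracBracket B Θ K F H) := by
      rw [antisymm H F, hB.diracBracket_neg_right]
    linear_combination hB.diracBracket_diracBracket Θ K hKC hCK F G H + h
      + antisymm H (diracBracket B Θ K F G)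

end IsPoissonBracket


end

/-- The Dirac bracket is again a Poisson bracket: antisymmetric, a biderivation,
and it satisfies the Jacobi identity strongly (identically in `A`). -/
theorem stmt6 {A : Type*} [CommRing A] (k : ℕ)
    (B : A → A → A)
    (hanti : ∀ a b, B a b = -B b a)
    (hadd : ∀ a b c, B (a + b) c = B a c + B b c)
    (hleib : ∀ a b c, B a (b * c) = B a b * c + b * B a c)
    (hjac : ∀ a b c, B a (B b c) + B b (B c a) + B c (B a b) = 0)
    (Θ : Fin k → A)
    (C Cinv : Matrix (Fin k) (Fin k) A)
    (hC : ∀ a b, C a b = B (Θ a) (Θ b))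
    (hCinv : C * Cinv = 1) (hCinv' : Cinv * C = 1)
    (D : A → A → A)
    (hD : ∀ F G, D F G = B F G - ∑ a, ∑ b, B F (Θ a) * Cinv a b * B (Θ b) G) :
    (∀ F G, D F G = -D G F) ∧
    (∀ F G H, D F (G * H) = D F G * H + G * D F H) ∧
    (∀ F G H, D (F * G) H = F * D G H + D F H * G) ∧
    (∀ F G H, D F (D G H) + D G (D H F) + D H (D F G) = 0) := by
  have hB : IsPoissonBracket B := ⟨hanti, hadd, hleib, hjac⟩
  obtain rfl : C = constraintMatrix B Θ := Matrix.ext hC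
  obtain rfl : D = diracBracket B Θ Cinv := funext₂ hD
  have hDirac := hB.isPoissonBracket_diracBracket Θ Cinv hCinv' hCinv
  exact ⟨hDirac.antisymm, hDirac.leibniz, hDirac.mul_left, hDirac.jacobi⟩
end

section
/- Let M be a finite-dimensional real vector space with a symplectic bilinear form represented by an invertible antisymmetric matrix E (Poisson bivector with entries E^{AB}). Let Θ : coordinates selecting a set of k linear constraints with {Θᵃ,Θᵇ} = E^{ab} invertible. Define the Dirac bivector E_D^{AB} = E^{AB} − Σ {Γ^A,Θᵃ} E_{ab} {Θᵇ,Γ^B} and the Dirac two-form E^{(D)}_{AB} = E_{AB} − Σ (∂_A Θᵃ) E_{ab} (∂_B Θᵇ), where E_{AB} is the inverse of E^{AB} and E_{ab} the inverse of E^{ab}. Then E_D · E^{(D)} · E_D = E_D and E^{(D)} · E_D · E^{(D)} = E^{(D)}, i.e. E^{(D)} is a compatible two-form for the (degenerate) Dirac structure. -/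
open Matrix

/-!
Put `P = E D C⁻¹ Dᵀ`. Since `C = Dᵀ E D`, `P` is idempotent, hence so is `Q = 1 - P`, and the two
Dirac objects factor as `E_D = Q E` and `E^{(D)} = E⁻¹ Q` (a right inverse of a square matrix
is also a left inverse). Both compatibility identities then collapse by `E E⁻¹ = 1` and `Q² = Q`.
-/

theorem IsIdempotentElem.mul_mul_mul_of_mul_eq_one {M : Type*} [Monoid M] {q e f : M}
    (hq : IsIdempotentElem q) (hef : e * f = 1) :
    q * e * (f * q) * (q * e) = q * e ∧ f * q * (q * e) * (f * q) = f * q := by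
  constructor
  · calc q * e * (f * q) * (q * e) = q * ((e * f) * ((q * q) * e)) := by simp only [mul_assoc]
      _ = q * e := by rw [hef, one_mul, hq.eq, ← mul_assoc, hq.eq]
  · calc f * q * (q * e) * (f * q) = f * ((q * q) * ((e * f) * q)) := by simp only [mul_assoc]
      _ = f * q := by rw [hef, one_mul, hq.eq, hq.eq]

theorem Matrix.isIdempotentElem_mul_mul_of_mul_eq_one {m k R : Type*} [Fintype m] [Fintype k]
    [DecidableEq k] [Semiring R] {A : Matrix m k R} {G : Matrix k k R} {B : Matrix k m R}
    (h : G * (B * A) = 1) : IsIdempotentElem (A * G * B) := by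
  calc A * G * B * (A * G * B) = A * (G * (B * A)) * G * B := by simp only [Matrix.mul_assoc]
    _ = A * G * B := by rw [h, Matrix.mul_one]

theorem stmt7_general (N k : ℕ)
    (E Elow : Matrix (Fin N) (Fin N) ℝ)
    (hEinv : E * Elow = 1)
    (D : Matrix (Fin N) (Fin k) ℝ)  -- columns are the gradients ∂_A Θᵃ
    (C Cinv : Matrix (Fin k) (Fin k) ℝ)
    (hC : C = Dᵀ * E * D)
    (hCinv' : Cinv * C = 1)
    (ED Elow_D : Matrix (Fin N) (Fin N) ℝ)
    (hED : ED = E - E * D * Cinv * (Dᵀ * E))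
    (hElowD : Elow_D = Elow - D * Cinv * Dᵀ) :
    ED * Elow_D * ED = ED ∧ Elow_D * ED * Elow_D = Elow_D := by
  set P := E * D * Cinv * Dᵀ
  have hP : IsIdempotentElem P :=
    isIdempotentElem_mul_mul_of_mul_eq_one (by rw [← hCinv', hC, Matrix.mul_assoc])
  have hED_eq : ED = (1 - P) * E := by
    rw [hED, Matrix.sub_mul, Matrix.one_mul, Matrix.mul_assoc _ Dᵀ]
  have hElowD_eq : Elow_D = Elow * (1 - P) := by
    rw [hElowD, Matrix.mul_sub, Matrix.mul_one]
    simp only [P, ← Matrix.mul_assoc, mul_eq_one_comm.mp hEinv, Matrix.one_mul]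
  rw [hED_eq, hElowD_eq]
  exact hP.one_sub.mul_mul_mul_of_mul_eq_one hEinv

/-- The canonical Dirac two-form is compatible with the Dirac bivector. -/
theorem stmt7 (N k : ℕ)
    (E Elow : Matrix (Fin N) (Fin N) ℝ)
    (hE : Eᵀ = -E)
    (hEinv : E * Elow = 1) (hEinv' : Elow * E = 1)
    (D : Matrix (Fin N) (Fin k) ℝ)  -- columns are the gradients ∂_A Θᵃ
    (C Cinv : Matrix (Fin k) (Fin k) ℝ)
    (hC : C = Dᵀ * E * D)
    (hCinv : C * Cinv = 1) (hCinv' : Cinv * C = 1)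
    (ED Elow_D : Matrix (Fin N) (Fin N) ℝ)
    (hED : ED = E - E * D * Cinv * (Dᵀ * E))
    (hElowD : Elow_D = Elow - D * Cinv * Dᵀ) :
    ED * Elow_D * ED = ED ∧ Elow_D * ED * Elow_D = Elow_D :=
  stmt7_general N k E Elow hEinv D C Cinv hC hCinv' ED Elow_D hED hElowD
end

section
/- Let A be a commutative ring with Poisson bracket {·,·}, let Θ¹,…,Θᵏ ∈ A with C^{ab} = {Θᵃ,Θᵇ} invertible with inverse C_{ab}, and let Λ = (Λᵃ_b) be a k×k matrix over A, invertible over A, with Θ'ᵃ = Σ_b Λᵃ_b Θᵇ. Let I ⊆ A be the ideal generated by Θ¹,…,Θᵏ, and assume the matrix C'^{ab} = {Θ'ᵃ,Θ'ᵇ} is also invertible. Then for all F, G ∈ A, the two Dirac brackets agree modulo I: {F,G}_{D'} − {F,G}_D ∈ I, where {F,G}_D = {F,G} − Σ {F,Θᵃ} C_{ab} {Θᵇ,G} and similarly for the primed constraints. -/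
/-!
Modulo the constraint ideal `I`, a Leibniz bracket with a constraint only sees the coefficients:
`{F, Λᵃ_b Θᵇ} ≡ Λᵃ_b {F, Θᵇ}`. Hence, over `A ⧸ I`, the primed constraint matrix is the congruent
matrix `Λ C Λᵀ`. So `C Λᵀ C'⁻¹` is a right inverse of `Λ` there, hence a two-sided one (square
matrices over a commutative ring), and `Λᵀ C'⁻¹ Λ = C⁻¹`. Substituting into the primed Dirac
correction gives back the unprimed one.
-/

open Matrix

namespace Matrix

variable {ι R : Type*} [Fintype ι] [CommRing R]

lemma map_sum_sum_mul_mul_eq_dotProduct_mulVec {S : Type*} [CommRing S] (f : R →+* S)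
    (u v : ι → R) (N : Matrix ι ι R) :
    f (∑ a, ∑ b, u a * N a b * v b) = (fun a => f (u a)) ⬝ᵥ (N.map f *ᵥ fun b => f (v b)) := by
  simp only [map_sum, map_mul, dotProduct, mulVec, map_apply, Finset.mul_sum, mul_assoc]

lemma mulVec_dotProduct_mulVec_mulVec (L N : Matrix ι ι R) (u v : ι → R) :
    (L *ᵥ u) ⬝ᵥ (N *ᵥ (L *ᵥ v)) = u ⬝ᵥ ((Lᵀ * N * L) *ᵥ v) := by
  rw [← vecMul_transpose, dotProduct_mulVec, vecMul_vecMul, dotProduct_mulVec, vecMul_vecMul,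
    ← dotProduct_mulVec]

variable [DecidableEq ι]

lemma transpose_mul_mul_eq_of_congr {L M M' N N' : Matrix ι ι R} (hM' : M' = L * M * Lᵀ)
    (hN' : M' * N' = 1) (hN : N * M = 1) : Lᵀ * N' * L = N := by
  have hL : L * (M * Lᵀ * N') = 1 := by rw [← hN', hM', mul_assoc, mul_assoc, mul_assoc]
  calc Lᵀ * N' * L = N * M * (Lᵀ * N' * L) := by rw [hN, one_mul]
    _ = N * (M * Lᵀ * N' * L) := by simp only [mul_assoc]
    _ = N := by rw [mul_eq_one_comm.mp hL, mul_one]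

end Matrix

section Bracket

variable {A : Type*} [CommRing A] {B : A → A → A}

lemma bracket_add_right (hanti : ∀ a b, B a b = -B b a)
    (hadd : ∀ a b c, B (a + b) c = B a c + B b c) (a b c : A) :
    B c (a + b) = B c a + B c b := by
  rw [hanti, hadd, neg_add, ← hanti, ← hanti]

lemma bracket_sum_right (hanti : ∀ a b, B a b = -B b a)
    (hadd : ∀ a b c, B (a + b) c = B a c + B b c) {ι : Type*} (s : Finset ι) (f : ι → A)
    (c : A) : B c (∑ i ∈ s, f i) = ∑ i ∈ s, B c (f i) :=
  map_sum (AddMonoidHom.mk' (B c ·) fun a b => bracket_add_right hanti hadd a b c) f s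

variable {I : Ideal A}

lemma mk_bracket_mul_of_mem (hleib : ∀ a b c, B a (b * c) = B a b * c + b * B a c) {θ : A}
    (hθ : θ ∈ I) (x r : A) :
    Ideal.Quotient.mk I (B x (r * θ)) = Ideal.Quotient.mk I r * Ideal.Quotient.mk I (B x θ) := by
  rw [hleib, map_add, map_mul, map_mul, Ideal.Quotient.eq_zero_iff_mem.mpr hθ, mul_zero, zero_add]

variable {ι : Type*} [Fintype ι] {Θ : ι → A}

lemma mk_bracket_mulVec_right (hanti : ∀ a b, B a b = -B b a)
    (hadd : ∀ a b c, B (a + b) c = B a c + B b c)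
    (hleib : ∀ a b c, B a (b * c) = B a b * c + b * B a c) (hΘ : ∀ i, Θ i ∈ I)
    (Λ : Matrix ι ι A) (x : A) :
    (fun a => Ideal.Quotient.mk I (B x ((Λ *ᵥ Θ) a))) =
      Λ.map (Ideal.Quotient.mk I) *ᵥ fun b => Ideal.Quotient.mk I (B x (Θ b)) := by
  ext a
  simp only [mulVec, dotProduct, bracket_sum_right hanti hadd, map_sum,
    mk_bracket_mul_of_mem hleib (hΘ _), map_apply]

lemma mk_bracket_mulVec_left (hanti : ∀ a b, B a b = -B b a)
    (hadd : ∀ a b c, B (a + b) c = B a c + B b c)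
    (hleib : ∀ a b c, B a (b * c) = B a b * c + b * B a c) (hΘ : ∀ i, Θ i ∈ I)
    (Λ : Matrix ι ι A) (x : A) :
    (fun a => Ideal.Quotient.mk I (B ((Λ *ᵥ Θ) a) x)) =
      Λ.map (Ideal.Quotient.mk I) *ᵥ fun b => Ideal.Quotient.mk I (B (Θ b) x) := by
  have hneg : ∀ y z, Ideal.Quotient.mk I (B y z) = -Ideal.Quotient.mk I (B z y) := fun y z => by
    rw [hanti, map_neg]
  simp only [hneg _ x, ← Pi.neg_def, mk_bracket_mulVec_right hanti hadd hleib hΘ, mulVec_neg]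

lemma map_mk_constraintMatrix_eq_mul_mul_transpose (hanti : ∀ a b, B a b = -B b a)
    (hadd : ∀ a b c, B (a + b) c = B a c + B b c)
    (hleib : ∀ a b c, B a (b * c) = B a b * c + b * B a c) (hΘ : ∀ i, Θ i ∈ I)
    (Λ C C' : Matrix ι ι A) (hC : ∀ a b, C a b = B (Θ a) (Θ b))
    (hC' : ∀ a b, C' a b = B ((Λ *ᵥ Θ) a) ((Λ *ᵥ Θ) b)) :
    C'.map (Ideal.Quotient.mk I) =
      Λ.map (Ideal.Quotient.mk I) * C.map (Ideal.Quotient.mk I) *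
        (Λ.map (Ideal.Quotient.mk I))ᵀ := by
  ext a b
  have hleft := congrFun (mk_bracket_mulVec_left hanti hadd hleib hΘ Λ ((Λ *ᵥ Θ) b)) a
  have hright c := congrFun (mk_bracket_mulVec_right hanti hadd hleib hΘ Λ (Θ c)) b
  rw [map_apply, hC', hleft]
  simp only [hright]
  simp only [mulVec, dotProduct, mul_apply, transpose_apply, map_apply, hC, Finset.mul_sum,
    Finset.sum_mul]
  rw [Finset.sum_comm]
  exact Finset.sum_congr rfl fun _ _ => Finset.sum_congr rfl fun _ _ => by ring

end Bracket

theorem stmt15_general {A : Type*} [CommRing A] (k : ℕ)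
    (B : A → A → A)
    (hanti : ∀ a b, B a b = -B b a)
    (hadd : ∀ a b c, B (a + b) c = B a c + B b c)
    (hleib : ∀ a b c, B a (b * c) = B a b * c + b * B a c)
    (Θ Θ' : Fin k → A)
    (Λ : Matrix (Fin k) (Fin k) A)
    (hΘ' : ∀ a, Θ' a = ∑ b, Λ a b * Θ b)
    (C Cinv C' C'inv : Matrix (Fin k) (Fin k) A)
    (hC : ∀ a b, C a b = B (Θ a) (Θ b))
    (hCinv' : Cinv * C = 1)
    (hC' : ∀ a b, C' a b = B (Θ' a) (Θ' b))
    (hC'inv : C' * C'inv = 1) :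
    ∀ F G : A,
      ((B F G - ∑ a, ∑ b, B F (Θ' a) * C'inv a b * B (Θ' b) G) -
       (B F G - ∑ a, ∑ b, B F (Θ a) * Cinv a b * B (Θ b) G)) ∈
        Ideal.span (Set.range Θ) := by
  intro F G
  set φ := Ideal.Quotient.mk (Ideal.span (Set.range Θ))
  have hΘ : ∀ a, Θ a ∈ Ideal.span (Set.range Θ) := fun a => Ideal.subset_span ⟨a, rfl⟩
  obtain rfl : Θ' = Λ *ᵥ Θ := funext hΘ'
  have hcongr : C'.map φ = Λ.map φ * C.map φ * (Λ.map φ)ᵀ :=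
    map_mk_constraintMatrix_eq_mul_mul_transpose hanti hadd hleib hΘ Λ C C' hC hC'
  have hinv : (Λ.map φ)ᵀ * C'inv.map φ * Λ.map φ = Cinv.map φ := by
    refine transpose_mul_mul_eq_of_congr hcongr ?_ ?_
    · simpa only [map_mul, map_one, RingHom.mapMatrix_apply] using congrArg φ.mapMatrix hC'inv
    · simpa only [map_mul, map_one, RingHom.mapMatrix_apply] using congrArg φ.mapMatrix hCinv'
  rw [← Ideal.Quotient.eq_zero_iff_mem, sub_sub_sub_cancel_left, map_sub, sub_eq_zero,
    map_sum_sum_mul_mul_eq_dotProduct_mulVec, map_sum_sum_mul_mul_eq_dotProduct_mulVec,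
    mk_bracket_mulVec_right hanti hadd hleib hΘ, mk_bracket_mulVec_left hanti hadd hleib hΘ,
    mulVec_dotProduct_mulVec_mulVec, hinv]

/-- On-shell invariance of the Dirac bracket under reparametrization
`Θ → Θ' = Λ Θ` of the second-class constraints. -/
theorem stmt15 {A : Type*} [CommRing A] (k : ℕ)
    (B : A → A → A)
    (hanti : ∀ a b, B a b = -B b a)
    (hadd : ∀ a b c, B (a + b) c = B a c + B b c)
    (hleib : ∀ a b c, B a (b * c) = B a b * c + b * B a c)
    (hjac : ∀ a b c, B a (B b c) + B b (B c a) + B c (B a b) = 0)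
    (Θ Θ' : Fin k → A)
    (Λ : Matrix (Fin k) (Fin k) A) (hΛ : IsUnit Λ)
    (hΘ' : ∀ a, Θ' a = ∑ b, Λ a b * Θ b)
    (C Cinv C' C'inv : Matrix (Fin k) (Fin k) A)
    (hC : ∀ a b, C a b = B (Θ a) (Θ b))
    (hCinv : C * Cinv = 1) (hCinv' : Cinv * C = 1)
    (hC' : ∀ a b, C' a b = B (Θ' a) (Θ' b))
    (hC'inv : C' * C'inv = 1) (hC'inv' : C'inv * C' = 1) :
    ∀ F G : A,
      ((B F G - ∑ a, ∑ b, B F (Θ' a) * C'inv a b * B (Θ' b) G) -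
       (B F G - ∑ a, ∑ b, B F (Θ a) * Cinv a b * B (Θ b) G)) ∈
        Ideal.span (Set.range Θ) :=
  stmt15_general k B hanti hadd hleib Θ Θ' Λ hΘ' C Cinv C' C'inv hC hCinv' hC' hC'inv
end
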